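/- arXiv:2012.06846 — 2 statements merged into one kernel-verified Lean document; each statement's English description precedes it below -/
import Mathlib

section
/- Let n, m, s be positive integers. Let f range over ℝⁿ. Assume a SUN_{n,s}(ξ,Ω,Δ,γ,Γ) prior density on f and the Gaussian likelihood L(f) := φ_m(Y − C f; R). Then for every f ∈ ℝⁿ the (unnormalized) posterior factorizes exactly as φ_m(Y − C f; R) · sun_{n,s}(f; ξ,Ω,Δ,γ,Γ) = φ_m(Y − Cξ; C Ω Cᵀ + R) · (Φ_s(γ_p; Γ_p)/Φ_s(γ; Γ)) · sun_{n,s}(f; ξ_p, Ω_p, Δ_p, γ_p, Γ_p); in particular the posterior density of f is the unified skew-normal density SUN_{n,s}(ξ_p, Ω_p, Δ_p, γ_p, Γ_p). (Lemma 1 of the paper.) -/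
/-!
Two Gaussian facts carry the proof. First, completing the square in `f` gives the Kalman
identity `φ(Y - C f; R) φ(f - ξ; Ω) = φ(Y - C ξ; C Ω Cᵀ + R) φ(f - ξ_p; Ω_p)`: Woodbury's formula
gives `Ω_p⁻¹ = Ω⁻¹ + Cᵀ R⁻¹ C`, and Sylvester's determinant identity gives
`det (C Ω Cᵀ + R) · det Ω_p = det R · det Ω`.
Second, the skewing factor `Φ_s(γ + Δᵀ Ω̄⁻¹ D_Ω⁻¹ (f - ξ); Γ - Δᵀ Ω̄⁻¹ Δ)` of the SUN density is
unchanged by the update: `Δ_p` is chosen so that `Δ_pᵀ Ω̄_p⁻¹ D_{Ω_p}⁻¹ = Δᵀ Ω̄⁻¹ D_Ω⁻¹`, `γ_p` absorbs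
the shift of the centre, and `Γ_p - Δ_pᵀ Ω̄_p⁻¹ Δ_p = Γ - Δᵀ Ω̄⁻¹ Δ`. So only the normalising
constant changes, from `Φ_s(γ; Γ)` to `Φ_s(γ_p; Γ_p)`, and the latter is nonzero because `Γ_p`,
a Schur complement of `M` plus a positive semidefinite term, is positive definite.
-/

open MeasureTheory Matrix

/-- Centered multivariate normal density `φ(z; S)` with covariance `S`. -/
noncomputable def gaussPdf {ι : Type*} [Fintype ι] [DecidableEq ι]
    (S : Matrix ι ι ℝ) (z : ι → ℝ) : ℝ :=
  (2 * Real.pi) ^ (-(Fintype.card ι : ℝ) / 2) * S.det ^ (-(1 : ℝ) / 2) *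
    Real.exp (-(1 / 2) * (z ⬝ᵥ (S⁻¹ *ᵥ z)))

/-- Centered multivariate normal CDF `Φ(a; S)` with covariance `S`. -/
noncomputable def gaussCdf {ι : Type*} [Fintype ι] [DecidableEq ι]
    (S : Matrix ι ι ℝ) (a : ι → ℝ) : ℝ :=
  ∫ u in {u : ι → ℝ | ∀ i, u i ≤ a i}, gaussPdf S u

/-- `D_K`: diagonal matrix with entries `√(K i i)`. -/
noncomputable def dMat {ι : Type*} [Fintype ι] [DecidableEq ι]
    (K : Matrix ι ι ℝ) : Matrix ι ι ℝ :=
  Matrix.diagonal fun i => Real.sqrt (K i i)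

/-- `K̄ := D_K⁻¹ K D_K⁻¹`: the correlation matrix associated with `K`. -/
noncomputable def corrMat {ι : Type*} [Fintype ι] [DecidableEq ι]
    (K : Matrix ι ι ℝ) : Matrix ι ι ℝ :=
  (dMat K)⁻¹ * K * (dMat K)⁻¹

/-- The unified skew-normal density `sun(z; ξ, Ω, Δ, γ, Γ)`. -/
noncomputable def sunPdf {ι κ : Type*} [Fintype ι] [DecidableEq ι] [Fintype κ] [DecidableEq κ]
    (xi : ι → ℝ) (Om : Matrix ι ι ℝ) (De : Matrix ι κ ℝ) (ga : κ → ℝ) (Ga : Matrix κ κ ℝ)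
    (z : ι → ℝ) : ℝ :=
  gaussPdf Om (z - xi) *
    gaussCdf (Ga - Deᵀ * (corrMat Om)⁻¹ * De)
      (ga + (Deᵀ * (corrMat Om)⁻¹ * (dMat Om)⁻¹) *ᵥ (z - xi)) /
    gaussCdf Ga ga


section PosDef

variable {ι κ : Type*} [Fintype ι] [DecidableEq ι] [Fintype κ] [DecidableEq κ]

omit [Fintype ι] [DecidableEq ι] in
theorem Matrix.PosDef.transpose_eq_self {K : Matrix ι ι ℝ} (hK : K.PosDef) : Kᵀ = K :=
  (isHermitian_iff_isSymm.mp hK.isHermitian).eq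

omit [DecidableEq ι] in
theorem Matrix.dotProduct_mulVec_comm {A : Matrix ι ι ℝ} (hA : Aᵀ = A) (u v : ι → ℝ) :
    u ⬝ᵥ A *ᵥ v = v ⬝ᵥ A *ᵥ u := by
  rw [dotProduct_mulVec, ← mulVec_transpose, hA, dotProduct_comm]

open scoped MatrixOrder in
theorem Matrix.PosDef.exists_sum_sq_le {P : Matrix ι ι ℝ} (hP : P.PosDef) :
    ∃ c : ℝ, 0 ≤ c ∧ ∀ u : ι → ℝ, ∑ i, u i ^ 2 ≤ c * (u ⬝ᵥ P *ᵥ u) := by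
  obtain ⟨Q, hQ, rfl⟩ :=
    CStarAlgebra.isStrictlyPositive_iff_eq_star_mul_self.mp hP.isStrictlyPositive
  refine ⟨∑ i, ∑ j, Q⁻¹ i j ^ 2, by positivity, fun u => ?_⟩
  have hquad : u ⬝ᵥ (star Q * Q) *ᵥ u = ∑ i, (Q *ᵥ u) i ^ 2 := by
    rw [← mulVec_mulVec, star_eq_conjTranspose, conjTranspose_eq_transpose_of_trivial,
      dotProduct_mulVec, vecMul_transpose]
    simp only [dotProduct, sq]
  have hu : Q⁻¹ *ᵥ (Q *ᵥ u) = u := by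
    rw [mulVec_mulVec, nonsing_inv_mul _ ((isUnit_iff_isUnit_det Q).mp hQ), one_mulVec]
  rw [hquad, Finset.sum_mul]
  refine Finset.sum_le_sum fun i _ => ?_
  calc u i ^ 2 = (Q⁻¹ *ᵥ (Q *ᵥ u)) i ^ 2 := by rw [hu]
    _ ≤ _ := Finset.sum_mul_sq_le_sq_mul_sq Finset.univ (Q⁻¹ i) (Q *ᵥ u)

omit [DecidableEq ι] in
theorem Matrix.PosDef.schur_complement₂₂ {A : Matrix ι ι ℝ} {B : Matrix ι κ ℝ}
    {D : Matrix κ κ ℝ} (hD : D.PosDef) (h : (fromBlocks A B Bᵀ D).PosDef) :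
    (A - B * D⁻¹ * Bᵀ).PosDef := by
  have := hD.isUnit.invertible
  rw [← conjTranspose_eq_transpose_of_trivial] at h ⊢
  refine .of_dotProduct_mulVec_pos ((IsHermitian.fromBlocks₂₂ A B hD.1).mp h.1) fun x hx => ?_
  have hpos := h.dotProduct_mulVec_pos (x := Sum.elim x (-((D⁻¹ * Bᴴ) *ᵥ x)))
    fun h0 => hx (funext fun i => congrFun h0 (Sum.inl i))
  rwa [dotProduct_mulVec, schur_complement_eq₂₂ A B x _ hD.1, add_neg_cancel, dotProduct_zero,
    zero_add, ← dotProduct_mulVec] at hpos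

end PosDef

section GaussianPositivity

variable {ι : Type*} [Fintype ι] [DecidableEq ι] {S : Matrix ι ι ℝ}

theorem gaussPdf_pos (hS : 0 < S.det) (u : ι → ℝ) : 0 < gaussPdf S u := by
  unfold gaussPdf
  positivity

theorem continuous_gaussPdf (S : Matrix ι ι ℝ) : Continuous (gaussPdf S) := by
  unfold gaussPdf dotProduct mulVec
  fun_prop

theorem integrable_gaussPdf (hS : S.PosDef) : Integrable (gaussPdf S) := by
  obtain ⟨c, hc, hcoer⟩ := hS.inv.exists_sum_sq_le
  set b : ℝ := (2 * (c + 1))⁻¹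
  set c₀ : ℝ := (2 * Real.pi) ^ (-(Fintype.card ι : ℝ) / 2) * S.det ^ (-(1 : ℝ) / 2)
  have hc₀ : 0 ≤ c₀ := by have := hS.det_pos; positivity
  have hdom : Integrable fun u : ι → ℝ => c₀ * ∏ i, Real.exp (-b * u i ^ 2) :=
    (Integrable.fintype_prod (f := fun _ x => Real.exp (-b * x ^ 2))
      fun _ => integrable_exp_neg_mul_sq (by positivity)).const_mul c₀
  refine hdom.mono' (continuous_gaussPdf S).aestronglyMeasurable (.of_forall fun u => ?_)
  have hq : 0 ≤ u ⬝ᵥ S⁻¹ *ᵥ u := by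
    simpa using hS.inv.posSemidef.dotProduct_mulVec_nonneg u
  have hexp : -(1 / 2) * (u ⬝ᵥ S⁻¹ *ᵥ u) ≤ -b * ∑ i, u i ^ 2 := by
    have := hcoer u
    rw [neg_mul, neg_mul, neg_le_neg_iff, inv_mul_le_iff₀ (by positivity)]
    nlinarith
  rw [Real.norm_of_nonneg (gaussPdf_pos hS.det_pos u).le, ← Real.exp_sum, ← Finset.mul_sum]
  exact mul_le_mul_of_nonneg_left (Real.exp_le_exp.mpr hexp) hc₀

theorem gaussCdf_pos (hS : S.PosDef) (a : ι → ℝ) : 0 < gaussCdf S a := by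
  have hsupp : Function.support (gaussPdf S) = Set.univ :=
    Set.eq_univ_of_forall fun u => (gaussPdf_pos hS.det_pos u).ne'
  rw [gaussCdf, setIntegral_pos_iff_support_of_nonneg_ae
    (.of_forall fun u => (gaussPdf_pos hS.det_pos u).le) (integrable_gaussPdf hS).integrableOn,
    hsupp, Set.univ_inter]
  have hbox : (Set.univ.pi fun i => Set.Icc (a i - 1) (a i)) ⊆ {u | ∀ i, u i ≤ a i} :=
    fun u hu i => (hu i (Set.mem_univ i)).2
  refine lt_of_lt_of_le ?_ (measure_mono hbox)
  rw [volume_pi_pi]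
  simp

end GaussianPositivity

section Correlation

variable {ι κ : Type*} [Fintype ι] [DecidableEq ι]

theorem isUnit_dMat {K : Matrix ι ι ℝ} (hK : K.PosDef) : IsUnit (dMat K) :=
  isUnit_diagonal.mpr <| Pi.isUnit_iff.mpr fun _ => (Real.sqrt_pos.mpr hK.diag_pos).ne'.isUnit

theorem dMat_transpose (K : Matrix ι ι ℝ) : (dMat K)ᵀ = dMat K :=
  diagonal_transpose _

theorem corrMat_transpose {K : Matrix ι ι ℝ} (hK : Kᵀ = K) : (corrMat K)ᵀ = corrMat K := by
  simp only [corrMat, transpose_mul, transpose_nonsing_inv, dMat_transpose, hK, Matrix.mul_assoc]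

theorem corrMat_posDef {K : Matrix ι ι ℝ} (hK : K.PosDef) : (corrMat K).PosDef := by
  have hstar : star (dMat K)⁻¹ = (dMat K)⁻¹ := by
    rw [star_eq_conjTranspose, conjTranspose_eq_transpose_of_trivial, transpose_nonsing_inv,
      dMat_transpose]
  have := (isUnit_nonsing_inv_iff.mpr (isUnit_dMat hK)).posDef_star_right_conjugate_iff.mpr hK
  rwa [hstar] at this

theorem posterior_skew_slope_eq {K K' : Matrix ι ι ℝ} (hK : Kᵀ = K) (hK' : K'.PosDef)
    (De : Matrix ι κ ℝ) :
    (corrMat K' * dMat K' * (dMat K)⁻¹ * (corrMat K)⁻¹ * De)ᵀ * (corrMat K')⁻¹ * (dMat K')⁻¹ =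
      Deᵀ * (corrMat K)⁻¹ * (dMat K)⁻¹ := by
  simp only [transpose_mul, transpose_nonsing_inv, dMat_transpose, corrMat_transpose hK,
    corrMat_transpose hK'.transpose_eq_self, ← Matrix.mul_assoc]
  rw [mul_nonsing_inv_cancel_right (A := corrMat K') _ (corrMat_posDef hK').det_pos.ne'.isUnit,
    mul_nonsing_inv_cancel_right (A := dMat K') _ ((isUnit_iff_isUnit_det _).mp (isUnit_dMat hK'))]

end Correlation

section Kalman

variable {ι κ : Type*} [Fintype ι] [DecidableEq ι] [Fintype κ] [DecidableEq κ]
  {Om : Matrix ι ι ℝ} {R : Matrix κ κ ℝ}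

noncomputable def kalmanGain (Om : Matrix ι ι ℝ) (C : Matrix κ ι ℝ) (R : Matrix κ κ ℝ) :
    Matrix ι κ ℝ :=
  Om * Cᵀ * (C * Om * Cᵀ + R)⁻¹

noncomputable def kalmanCov (Om : Matrix ι ι ℝ) (C : Matrix κ ι ℝ) (R : Matrix κ κ ℝ) :
    Matrix ι ι ℝ :=
  Om - kalmanGain Om C R * C * Om

omit [DecidableEq ι] [DecidableEq κ] in
theorem posDef_mul_mul_transpose_add (hOm : Om.PosDef) (hR : R.PosDef) (C : Matrix κ ι ℝ) :
    (C * Om * Cᵀ + R).PosDef := by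
  have := hOm.posSemidef.mul_mul_conjTranspose_same C
  rw [conjTranspose_eq_transpose_of_trivial] at this
  exact hR.posSemidef_add this

omit [DecidableEq ι] in
theorem kalmanGain_mul_mul_mul_transpose (hOm : Om.PosDef) (hR : R.PosDef) (C : Matrix κ ι ℝ) :
    kalmanGain Om C R * (C * Om * Cᵀ) = Om * Cᵀ - kalmanGain Om C R * R := by
  rw [eq_sub_iff_add_eq, ← Matrix.mul_add, kalmanGain,
    nonsing_inv_mul_cancel_right (A := C * Om * Cᵀ + R) _
      (posDef_mul_mul_transpose_add hOm hR C).det_pos.ne'.isUnit]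

theorem kalmanCov_mul_precision (hOm : Om.PosDef) (hR : R.PosDef) (C : Matrix κ ι ℝ) :
    kalmanCov Om C R * (Om⁻¹ + Cᵀ * R⁻¹ * C) = 1 := by
  calc kalmanCov Om C R * (Om⁻¹ + Cᵀ * R⁻¹ * C)
      = Om * Om⁻¹ + Om * Cᵀ * R⁻¹ * C - kalmanGain Om C R * C * (Om * Om⁻¹)
          - kalmanGain Om C R * (C * Om * Cᵀ) * R⁻¹ * C := by
        simp only [kalmanCov, Matrix.sub_mul, Matrix.mul_add, Matrix.mul_assoc]; abel
    _ = 1 := by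
        rw [kalmanGain_mul_mul_mul_transpose hOm hR, Matrix.sub_mul, Matrix.sub_mul,
          mul_nonsing_inv_cancel_right (A := R) _ hR.det_pos.ne'.isUnit,
          mul_nonsing_inv _ hOm.det_pos.ne'.isUnit, Matrix.mul_one]
        abel

omit [DecidableEq ι] in
theorem mul_kalmanGain (hOm : Om.PosDef) (hR : R.PosDef) (C : Matrix κ ι ℝ) :
    C * kalmanGain Om C R = 1 - R * (C * Om * Cᵀ + R)⁻¹ := by
  rw [eq_sub_iff_add_eq, kalmanGain, ← Matrix.mul_assoc, ← Matrix.mul_assoc, ← Matrix.add_mul,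
    mul_nonsing_inv _ (posDef_mul_mul_transpose_add hOm hR C).det_pos.ne'.isUnit]

theorem precision_mul_kalmanGain (hOm : Om.PosDef) (hR : R.PosDef) (C : Matrix κ ι ℝ) :
    (Om⁻¹ + Cᵀ * R⁻¹ * C) * kalmanGain Om C R = Cᵀ * R⁻¹ := by
  rw [Matrix.add_mul, Matrix.mul_assoc, mul_kalmanGain hOm hR, kalmanGain, Matrix.mul_assoc,
    Matrix.mul_assoc, nonsing_inv_mul_cancel_left _ _ hOm.det_pos.ne'.isUnit, Matrix.mul_sub,
    Matrix.mul_one, Matrix.mul_assoc Cᵀ R⁻¹,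
    nonsing_inv_mul_cancel_left (A := R) _ hR.det_pos.ne'.isUnit]
  abel

theorem det_mul_mul_transpose_add_mul_det_kalmanCov (hOm : Om.PosDef) (hR : R.PosDef)
    (C : Matrix κ ι ℝ) :
    (C * Om * Cᵀ + R).det * (kalmanCov Om C R).det = R.det * Om.det := by
  have hfactor : C * Om * Cᵀ + R = R * (1 + R⁻¹ * C * (Om * Cᵀ)) := by
    simp only [Matrix.mul_add, Matrix.mul_one, ← Matrix.mul_assoc,
      mul_nonsing_inv _ hR.det_pos.ne'.isUnit, Matrix.one_mul, add_comm]
  have hOmPrec : Om * (Om⁻¹ + Cᵀ * R⁻¹ * C) = 1 + Om * Cᵀ * (R⁻¹ * C) := by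
    rw [Matrix.mul_add, mul_nonsing_inv _ hOm.det_pos.ne'.isUnit]
    simp only [Matrix.mul_assoc]
  calc (C * Om * Cᵀ + R).det * (kalmanCov Om C R).det
      = R.det * (Om * (Om⁻¹ + Cᵀ * R⁻¹ * C)).det * (kalmanCov Om C R).det := by
        rw [hfactor, det_mul, det_one_add_mul_comm, hOmPrec]
    _ = R.det * Om.det * (kalmanCov Om C R * (Om⁻¹ + Cᵀ * R⁻¹ * C)).det := by
        rw [det_mul, det_mul]; ring
    _ = R.det * Om.det := by rw [kalmanCov_mul_precision hOm hR, det_one, mul_one]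

theorem kalman_complete_square (hOm : Om.PosDef) (hR : R.PosDef) (C : Matrix κ ι ℝ)
    (e : ι → ℝ) (r : κ → ℝ) :
    (r - C *ᵥ e) ⬝ᵥ R⁻¹ *ᵥ (r - C *ᵥ e) + e ⬝ᵥ Om⁻¹ *ᵥ e =
      r ⬝ᵥ (C * Om * Cᵀ + R)⁻¹ *ᵥ r +
        (e - kalmanGain Om C R *ᵥ r) ⬝ᵥ (Om⁻¹ + Cᵀ * R⁻¹ * C) *ᵥ (e - kalmanGain Om C R *ᵥ r) := by
  set M := Om⁻¹ + Cᵀ * R⁻¹ * C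
  set b := kalmanGain Om C R *ᵥ r
  have hRinv : (R⁻¹)ᵀ = R⁻¹ := hR.inv.transpose_eq_self
  have hMb : M *ᵥ b = Cᵀ *ᵥ (R⁻¹ *ᵥ r) := by
    rw [mulVec_mulVec, precision_mul_kalmanGain hOm hR, mulVec_mulVec]
  have hCb : C *ᵥ b = r - R *ᵥ ((C * Om * Cᵀ + R)⁻¹ *ᵥ r) := by
    rw [mulVec_mulVec, mul_kalmanGain hOm hR, sub_mulVec, one_mulVec, mulVec_mulVec]
  have hcross : e ⬝ᵥ M *ᵥ b = (C *ᵥ e) ⬝ᵥ R⁻¹ *ᵥ r := by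
    rw [hMb, ← transpose_transpose C, dotProduct_transpose_mulVec, transpose_transpose,
      dotProduct_comm]
  have hMsymm : Mᵀ = M := by
    rw [transpose_add, transpose_mul, transpose_mul, transpose_transpose, hRinv,
      hOm.inv.transpose_eq_self, ← Matrix.mul_assoc]
  have hcross' : b ⬝ᵥ M *ᵥ e = (C *ᵥ e) ⬝ᵥ R⁻¹ *ᵥ r := by
    rw [dotProduct_mulVec_comm hMsymm, hcross]
  have hprec : e ⬝ᵥ M *ᵥ e = e ⬝ᵥ Om⁻¹ *ᵥ e + (C *ᵥ e) ⬝ᵥ R⁻¹ *ᵥ (C *ᵥ e) := by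
    rw [add_mulVec, dotProduct_add, ← mulVec_mulVec, ← mulVec_mulVec, dotProduct_mulVec e Cᵀ,
      vecMul_transpose]
  have hgain : b ⬝ᵥ M *ᵥ b = r ⬝ᵥ R⁻¹ *ᵥ r - r ⬝ᵥ (C * Om * Cᵀ + R)⁻¹ *ᵥ r := by
    rw [hMb, dotProduct_mulVec b Cᵀ, vecMul_transpose, hCb, sub_dotProduct,
      dotProduct_comm (R *ᵥ _), dotProduct_mulVec_comm hR.transpose_eq_self, mulVec_mulVec,
      mul_nonsing_inv _ hR.det_pos.ne'.isUnit, one_mulVec,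
      dotProduct_comm ((C * Om * Cᵀ + R)⁻¹ *ᵥ r)]
  have hsymm : r ⬝ᵥ R⁻¹ *ᵥ (C *ᵥ e) = (C *ᵥ e) ⬝ᵥ R⁻¹ *ᵥ r := dotProduct_mulVec_comm hRinv _ _
  simp only [mulVec_sub, dotProduct_sub, sub_dotProduct]
  linarith

theorem posDef_kalmanCov (hOm : Om.PosDef) (hR : R.PosDef) (C : Matrix κ ι ℝ) :
    (kalmanCov Om C R).PosDef := by
  have hobs := hR.inv.posSemidef.conjTranspose_mul_mul_same C
  rw [conjTranspose_eq_transpose_of_trivial] at hobs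
  rw [← inv_eq_left_inv (kalmanCov_mul_precision hOm hR C)]
  exact (hOm.inv.add_posSemidef hobs).inv

theorem gaussPdf_mul_gaussPdf (hOm : Om.PosDef) (hR : R.PosDef) (C : Matrix κ ι ℝ)
    (Y : κ → ℝ) (xi f : ι → ℝ) :
    gaussPdf R (Y - C *ᵥ f) * gaussPdf Om (f - xi) =
      gaussPdf (C * Om * Cᵀ + R) (Y - C *ᵥ xi) *
        gaussPdf (kalmanCov Om C R)
          (f - (xi + kalmanGain Om C R *ᵥ (Y - C *ᵥ xi))) := by
  set r := Y - C *ᵥ xi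
  set e := f - xi
  have hres : Y - C *ᵥ f = r - C *ᵥ e := by simp only [r, e, mulVec_sub]; abel
  have hcen : f - (xi + kalmanGain Om C R *ᵥ r) = e - kalmanGain Om C R *ᵥ r := by
    simp only [e]; abel
  have hinv : (kalmanCov Om C R)⁻¹ = Om⁻¹ + Cᵀ * R⁻¹ * C :=
    inv_eq_right_inv (kalmanCov_mul_precision hOm hR C)
  have hdet := det_mul_mul_transpose_add_mul_det_kalmanCov hOm hR C
  have hS := (posDef_mul_mul_transpose_add hOm hR C).det_pos
  have hP := (posDef_kalmanCov hOm hR C).det_pos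
  have hdets : R.det ^ (-(1 : ℝ) / 2) * Om.det ^ (-(1 : ℝ) / 2) =
      (C * Om * Cᵀ + R).det ^ (-(1 : ℝ) / 2) *
        (kalmanCov Om C R).det ^ (-(1 : ℝ) / 2) := by
    rw [← Real.mul_rpow hR.det_pos.le hOm.det_pos.le, ← Real.mul_rpow hS.le hP.le, hdet]
  have hcollect : ∀ a b c a' b' c' : ℝ,
      a * b * Real.exp c * (a' * b' * Real.exp c') = a * a' * (b * b') * Real.exp (c + c') :=
    fun _ _ _ _ _ _ => by rw [Real.exp_add]; ring
  unfold gaussPdf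
  rw [hres, hcen, hinv, hcollect, hcollect, hdets, ← mul_add, ← mul_add,
    kalman_complete_square hOm hR C e r]

end Kalman

theorem mul_sunPdf_eq_of_mul_gaussPdf {ι σ : Type*} [Fintype ι] [DecidableEq ι] [Fintype σ]
    [DecidableEq σ] {xi xi' : ι → ℝ} {Om Om' : Matrix ι ι ℝ} {De De' : Matrix ι σ ℝ}
    {ga ga' : σ → ℝ} {Ga Ga' : Matrix σ σ ℝ} (hOm : Om.PosDef) (hOm' : Om'.PosDef)
    (hM : (fromBlocks Ga Deᵀ De (corrMat Om)).PosDef)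
    (hDe' : De' = corrMat Om' * dMat Om' * (dMat Om)⁻¹ * (corrMat Om)⁻¹ * De)
    (hga' : ga' = ga + (Deᵀ * (corrMat Om)⁻¹ * (dMat Om)⁻¹) *ᵥ (xi' - xi))
    (hGa' : Ga' = Ga - Deᵀ * (corrMat Om)⁻¹ * De + De'ᵀ * (corrMat Om')⁻¹ * De')
    {L A : ℝ} (f : ι → ℝ) (h : L * gaussPdf Om (f - xi) = A * gaussPdf Om' (f - xi')) :
    L * sunPdf xi Om De ga Ga f =
      A * (gaussCdf Ga' ga' / gaussCdf Ga ga) * sunPdf xi' Om' De' ga' Ga' f := by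
  have hslope : De'ᵀ * (corrMat Om')⁻¹ * (dMat Om')⁻¹ = Deᵀ * (corrMat Om)⁻¹ * (dMat Om)⁻¹ :=
    hDe' ▸ posterior_skew_slope_eq hOm.transpose_eq_self hOm' De
  have hSchur := (corrMat_posDef hOm).schur_complement₂₂ (A := Ga) (B := Deᵀ)
    (by rwa [transpose_transpose])
  rw [transpose_transpose] at hSchur
  have hGa'_pos : Ga'.PosDef := by
    have := (corrMat_posDef hOm').inv.posSemidef.conjTranspose_mul_mul_same De'
    rw [conjTranspose_eq_transpose_of_trivial] at this
    exact hGa' ▸ hSchur.add_posSemidef this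
  have hcov : Ga' - De'ᵀ * (corrMat Om')⁻¹ * De' = Ga - Deᵀ * (corrMat Om)⁻¹ * De := by
    rw [hGa', add_sub_cancel_right]
  have harg : ga' + (De'ᵀ * (corrMat Om')⁻¹ * (dMat Om')⁻¹) *ᵥ (f - xi') =
      ga + (Deᵀ * (corrMat Om)⁻¹ * (dMat Om)⁻¹) *ᵥ (f - xi) := by
    rw [hslope, hga', add_assoc, ← mulVec_add, sub_add_sub_cancel']
  have hw := (gaussCdf_pos hGa'_pos ga').ne'
  unfold sunPdf
  rw [hcov, harg]
  generalize gaussCdf (Ga - Deᵀ * (corrMat Om)⁻¹ * De) _ = k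
  calc L * (gaussPdf Om (f - xi) * k / gaussCdf Ga ga)
      = A * gaussPdf Om' (f - xi') * k / gaussCdf Ga ga := by rw [← h]; ring
    _ = _ := by field_simp

theorem sun_gaussian_conjugate_general
    {n m s : ℕ}
    (xi : Fin n → ℝ) (Om : Matrix (Fin n) (Fin n) ℝ) (hOm : Om.PosDef)
    (De : Matrix (Fin n) (Fin s) ℝ) (ga : Fin s → ℝ)
    (Ga : Matrix (Fin s) (Fin s) ℝ)
    (hM : (Matrix.fromBlocks Ga Deᵀ De (corrMat Om)).PosDef)
    (C : Matrix (Fin m) (Fin n) ℝ) (R : Matrix (Fin m) (Fin m) ℝ) (hR : R.PosDef)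
    (Y : Fin m → ℝ)
    (xip : Fin n → ℝ) (Omp : Matrix (Fin n) (Fin n) ℝ)
    (Dep : Matrix (Fin n) (Fin s) ℝ) (gap : Fin s → ℝ) (Gap : Matrix (Fin s) (Fin s) ℝ)
    (hxip : xip = xi + (Om * Cᵀ * (C * Om * Cᵀ + R)⁻¹) *ᵥ (Y - C *ᵥ xi))
    (hOmp : Omp = Om - Om * Cᵀ * (C * Om * Cᵀ + R)⁻¹ * C * Om)
    (hDep : Dep = corrMat Omp * dMat Omp * (dMat Om)⁻¹ * (corrMat Om)⁻¹ * De)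
    (hgap : gap = ga + (Deᵀ * (corrMat Om)⁻¹ * (dMat Om)⁻¹) *ᵥ (xip - xi))
    (hGap : Gap = Ga - Deᵀ * (corrMat Om)⁻¹ * De + Depᵀ * (corrMat Omp)⁻¹ * Dep) :
    ∀ f : Fin n → ℝ,
      gaussPdf R (Y - C *ᵥ f) * sunPdf xi Om De ga Ga f =
        gaussPdf (C * Om * Cᵀ + R) (Y - C *ᵥ xi) *
          (gaussCdf Gap gap / gaussCdf Ga ga) * sunPdf xip Omp Dep gap Gap f := by
  intro f
  subst hxip hOmp
  exact mul_sunPdf_eq_of_mul_gaussPdf hOm (posDef_kalmanCov hOm hR C) hM hDep hgap hGap f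
    (gaussPdf_mul_gaussPdf hOm hR C Y xi f)

/-- Lemma 1: the SUN prior is conjugate to the Gaussian likelihood. -/
theorem sun_gaussian_conjugate
    {n m s : ℕ} (hn : 0 < n) (hm : 0 < m) (hs : 0 < s)
    (xi : Fin n → ℝ) (Om : Matrix (Fin n) (Fin n) ℝ) (hOm : Om.PosDef)
    (De : Matrix (Fin n) (Fin s) ℝ) (ga : Fin s → ℝ)
    (Ga : Matrix (Fin s) (Fin s) ℝ) (hGa : Ga.IsSymm)
    (hM : (Matrix.fromBlocks Ga Deᵀ De (corrMat Om)).PosDef)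
    (C : Matrix (Fin m) (Fin n) ℝ) (R : Matrix (Fin m) (Fin m) ℝ) (hR : R.PosDef)
    (Y : Fin m → ℝ)
    (xip : Fin n → ℝ) (Omp : Matrix (Fin n) (Fin n) ℝ)
    (Dep : Matrix (Fin n) (Fin s) ℝ) (gap : Fin s → ℝ) (Gap : Matrix (Fin s) (Fin s) ℝ)
    (hxip : xip = xi + (Om * Cᵀ * (C * Om * Cᵀ + R)⁻¹) *ᵥ (Y - C *ᵥ xi))
    (hOmp : Omp = Om - Om * Cᵀ * (C * Om * Cᵀ + R)⁻¹ * C * Om)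
    (hDep : Dep = corrMat Omp * dMat Omp * (dMat Om)⁻¹ * (corrMat Om)⁻¹ * De)
    (hgap : gap = ga + (Deᵀ * (corrMat Om)⁻¹ * (dMat Om)⁻¹) *ᵥ (xip - xi))
    (hGap : Gap = Ga - Deᵀ * (corrMat Om)⁻¹ * De + Depᵀ * (corrMat Omp)⁻¹ * Dep) :
    ∀ f : Fin n → ℝ,
      gaussPdf R (Y - C *ᵥ f) * sunPdf xi Om De ga Ga f =
        gaussPdf (C * Om * Cᵀ + R) (Y - C *ᵥ xi) *
          (gaussCdf Gap gap / gaussCdf Ga ga) * sunPdf xip Omp Dep gap Gap f :=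
  sun_gaussian_conjugate_general xi Om hOm De ga Ga hM C R hR Y xip Omp Dep gap Gap hxip hOmp hDep
    hgap hGap
end

section
/- (Selection representation of the unified skew-normal, Section 2.2 of the paper.) Let s, p ≥ 1, Γ ∈ ℝ^{s×s} and Ω̄ ∈ ℝ^{p×p} symmetric, Δ ∈ ℝ^{p×s}, γ ∈ ℝ^s, and assume M := [[Γ, Δᵀ],[Δ, Ω̄]] ∈ ℝ^{(s+p)×(s+p)} is positive definite. Then for every y ∈ ℝ^p, ∫_{{t ∈ ℝ^s : t_i + γ_i > 0 for all i}} φ_{s+p}((t, y); M) dt = φ_p(y; Ω̄) · Φ_s(γ + Δᵀ Ω̄⁻¹ y; Γ − Δᵀ Ω̄⁻¹ Δ). Consequently, if (x₀, x₁) is a centered Gaussian vector with covariance M, the conditional density of x₁ given the event {x₀ + γ > 0 componentwise} is y ↦ φ_p(y; Ω̄) · Φ_s(γ + Δᵀ Ω̄⁻¹ y; Γ − Δᵀ Ω̄⁻¹ Δ)/Φ_s(γ; Γ), i.e. the SUN_{p,s}(0, Ω̄, Δ, γ, Γ) density. -/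
open MeasureTheory Matrix

/-!
Write `Σ := Γ - Δᵀ Ω̄⁻¹ Δ` for the Schur complement of `Ω̄` in `M` and `μ := Δᵀ Ω̄⁻¹ y`. Solving
`M (a, b) = (t, y)` by block elimination gives
`(t, y)ᵀ M⁻¹ (t, y) = (t - μ)ᵀ Σ⁻¹ (t - μ) + yᵀ Ω̄⁻¹ y`, and `det M = det Ω̄ · det Σ`, so the joint
density factors as `φ_p(y; Ω̄) · φ_s(t - μ; Σ)`.
The substitution `u = μ - t` maps `{t + γ > 0}` onto the open box `{u < γ + μ}`, and `φ_s` is even;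
the open and closed boxes differ by a null set, which leaves `Φ_s(γ + μ; Σ)`.
-/

namespace Matrix

section RCLike

open scoped ComplexOrder

variable {m n 𝕜 : Type*} [RCLike 𝕜]

theorem PosDef.toBlocks₂₂ [Fintype n] {M : Matrix (m ⊕ n) (m ⊕ n) 𝕜} (hM : M.PosDef) :
    M.toBlocks₂₂.PosDef :=
  hM.submatrix Sum.inr_injective

theorem PosDef.schur_complement₂₂_s11 [Fintype m] [Fintype n] [DecidableEq n] {A : Matrix m m 𝕜}
    {B : Matrix m n 𝕜} {D : Matrix n n 𝕜} (hM : (fromBlocks A B Bᴴ D).PosDef) [Invertible D] :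
    (A - B * D⁻¹ * Bᴴ).PosDef := by
  obtain ⟨hA, -, -, hD⟩ := isHermitian_fromBlocks_iff.mp hM.isHermitian
  refine .of_dotProduct_mulVec_pos (hA.sub (isHermitian_mul_mul_conjTranspose B hD.inv))
    fun x hx => ?_
  have hxy : (x ⊕ᵥ -((D⁻¹ * Bᴴ) *ᵥ x)) ≠ 0 := fun h => hx (funext fun i => congrFun h (.inl i))
  simpa [dotProduct_mulVec, schur_complement_eq₂₂ A B _ _ hD] using hM.dotProduct_mulVec_pos hxy

end RCLike

section CommRing

variable {m n R : Type*} [Fintype m] [DecidableEq m] [Fintype n] [DecidableEq n] [CommRing R]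

theorem sumElim_dotProduct_inv_fromBlocks_mulVec {A : Matrix m m R} {B : Matrix n m R}
    {D : Matrix n n R} (hD : D.IsSymm) [Invertible D] (hS : IsUnit (A - Bᵀ * D⁻¹ * B).det)
    (t : m → R) (y : n → R) :
    (t ⊕ᵥ y) ⬝ᵥ (fromBlocks A Bᵀ B D)⁻¹ *ᵥ (t ⊕ᵥ y) =
      (t - (Bᵀ * D⁻¹) *ᵥ y) ⬝ᵥ (A - Bᵀ * D⁻¹ * B)⁻¹ *ᵥ (t - (Bᵀ * D⁻¹) *ᵥ y) +
        y ⬝ᵥ D⁻¹ *ᵥ y := by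
  set a := (A - Bᵀ * D⁻¹ * B)⁻¹ *ᵥ (t - (Bᵀ * D⁻¹) *ᵥ y)
  set b := D⁻¹ *ᵥ (y - B *ᵥ a)
  have hM : IsUnit (fromBlocks A Bᵀ B D).det := by
    rw [det_fromBlocks₂₂, invOf_eq_nonsing_inv]
    exact (isUnit_det_of_invertible D).mul hS
  have hAa : A *ᵥ a = t - (Bᵀ * D⁻¹) *ᵥ y + (Bᵀ * D⁻¹ * B) *ᵥ a := by
    rw [← sub_eq_iff_eq_add, ← sub_mulVec, mulVec_mulVec, mul_nonsing_inv _ hS, one_mulVec]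
  have hBb : Bᵀ *ᵥ b = (Bᵀ * D⁻¹) *ᵥ y - (Bᵀ * D⁻¹ * B) *ᵥ a := by
    simp only [b, mulVec_sub, mulVec_mulVec, Matrix.mul_assoc]
  have hDb : D *ᵥ b = y - B *ᵥ a := by
    rw [mulVec_mulVec, mul_nonsing_inv _ (isUnit_det_of_invertible D), one_mulVec]
  have hsolve : fromBlocks A Bᵀ B D *ᵥ (a ⊕ᵥ b) = t ⊕ᵥ y := by
    rw [fromBlocks_mulVec, Sum.elim_comp_inl, Sum.elim_comp_inr, hAa, hBb, hDb, add_sub_cancel]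
    congr 1
    abel
  have hinv : (fromBlocks A Bᵀ B D)⁻¹ *ᵥ (t ⊕ᵥ y) = a ⊕ᵥ b := by
    rw [← hsolve, mulVec_mulVec, nonsing_inv_mul _ hM, one_mulVec]
  have hcross : (Bᵀ * D⁻¹) *ᵥ y ⬝ᵥ a = y ⬝ᵥ (D⁻¹ * B) *ᵥ a := by
    rw [dotProduct_comm, dotProduct_mulVec, ← mulVec_transpose, transpose_mul, transpose_transpose,
      transpose_nonsing_inv, hD.eq, dotProduct_comm]
  rw [hinv, sumElim_dotProduct_sumElim, sub_dotProduct, hcross]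
  simp only [b, mulVec_sub, dotProduct_sub, mulVec_mulVec]
  abel

end CommRing

end Matrix

section GaussianDensity

variable {ι κ : Type*} [Fintype ι] [DecidableEq ι] [Fintype κ] [DecidableEq κ]

theorem gaussPdf_neg (S : Matrix ι ι ℝ) (u : ι → ℝ) : gaussPdf S (-u) = gaussPdf S u := by
  rw [gaussPdf, mulVec_neg, dotProduct_neg, neg_dotProduct, neg_neg, gaussPdf]

theorem gaussPdf_fromBlocks {A : Matrix ι ι ℝ} {B : Matrix κ ι ℝ} {D : Matrix κ κ ℝ}
    (hD : D.PosDef) (hS : (A - Bᵀ * D⁻¹ * B).PosDef) (t : ι → ℝ) (y : κ → ℝ) :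
    gaussPdf (fromBlocks A Bᵀ B D) (t ⊕ᵥ y) =
      gaussPdf D y * gaussPdf (A - Bᵀ * D⁻¹ * B) (t - (Bᵀ * D⁻¹) *ᵥ y) := by
  have := hD.isUnit.invertible
  have hDsymm : D.IsSymm := isHermitian_iff_isSymm.mp hD.isHermitian
  simp only [gaussPdf]
  rw [sumElim_dotProduct_inv_fromBlocks_mulVec hDsymm hS.det_pos.ne'.isUnit, det_fromBlocks₂₂,
    invOf_eq_nonsing_inv, Real.mul_rpow hD.det_pos.le hS.det_pos.le, Fintype.card_sum,
    Nat.cast_add, add_comm (Fintype.card ι : ℝ), neg_add, add_div,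
    Real.rpow_add (by positivity), mul_add, Real.exp_add]
  ring

open Set in
theorem setIntegral_gaussPdf_sub (S : Matrix ι ι ℝ) (a μ : ι → ℝ) :
    ∫ t in {t : ι → ℝ | ∀ i, t i + a i > 0}, gaussPdf S (t - μ) = gaussCdf S (a + μ) := by
  have hpre : (μ - ·) ⁻¹' {t : ι → ℝ | ∀ i, t i + a i > 0} =
      univ.pi fun i => Iio ((a + μ) i) := by
    ext u
    simp only [mem_preimage, mem_ofPred_eq, mem_pi, mem_univ, mem_Iio, Pi.sub_apply, Pi.add_apply,
      true_implies]
    refine forall_congr' fun i => ?_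
    constructor <;> intro h <;> linarith
  rw [← (Measure.measurePreserving_sub_left volume μ).setIntegral_preimage_emb
    (measurableEmbedding_subLeft μ), hpre, gaussCdf, volume_pi,
    setIntegral_congr_set Measure.univ_pi_Iio_ae_eq_Iic]
  simp only [sub_sub_cancel_left, gaussPdf_neg]
  rfl

end GaussianDensity

theorem sun_selection_representation_general
    {s p : ℕ}
    (Ga : Matrix (Fin s) (Fin s) ℝ)
    (Omb : Matrix (Fin p) (Fin p) ℝ)
    (De : Matrix (Fin p) (Fin s) ℝ) (ga : Fin s → ℝ)
    (hM : (Matrix.fromBlocks Ga Deᵀ De Omb).PosDef) :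
    ∀ y : Fin p → ℝ,
      (∫ t in {t : Fin s → ℝ | ∀ i, t i + ga i > 0},
          gaussPdf (Matrix.fromBlocks Ga Deᵀ De Omb) (Sum.elim t y)) =
        gaussPdf Omb y * gaussCdf (Ga - Deᵀ * Omb⁻¹ * De) (ga + (Deᵀ * Omb⁻¹) *ᵥ y) ∧
      (∫ t in {t : Fin s → ℝ | ∀ i, t i + ga i > 0},
          gaussPdf (Matrix.fromBlocks Ga Deᵀ De Omb) (Sum.elim t y)) / gaussCdf Ga ga =
        gaussPdf Omb y * gaussCdf (Ga - Deᵀ * Omb⁻¹ * De) (ga + (Deᵀ * Omb⁻¹) *ᵥ y) /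
          gaussCdf Ga ga := by
  intro y
  have hOmb : Omb.PosDef := by simpa using hM.toBlocks₂₂
  have := hOmb.isUnit.invertible
  have hM' : (fromBlocks Ga Deᵀ Deᵀᴴ Omb).PosDef := by
    rwa [conjTranspose_eq_transpose_of_trivial, transpose_transpose]
  have hS : (Ga - Deᵀ * Omb⁻¹ * De).PosDef := by simpa using hM'.schur_complement₂₂_s11
  have hdensity : ∫ t in {t : Fin s → ℝ | ∀ i, t i + ga i > 0},
      gaussPdf (fromBlocks Ga Deᵀ De Omb) (t ⊕ᵥ y) =
        gaussPdf Omb y * gaussCdf (Ga - Deᵀ * Omb⁻¹ * De) (ga + (Deᵀ * Omb⁻¹) *ᵥ y) := by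
    simp_rw [gaussPdf_fromBlocks hOmb hS]
    rw [integral_const_mul, setIntegral_gaussPdf_sub]
  exact ⟨hdensity, by rw [hdensity]⟩

/-- Selection representation of the unified skew-normal (Section 2.2). -/
theorem sun_selection_representation
    {s p : ℕ} (hs : 0 < s) (hp : 0 < p)
    (Ga : Matrix (Fin s) (Fin s) ℝ) (hGa : Ga.IsSymm)
    (Omb : Matrix (Fin p) (Fin p) ℝ) (hOmb : Omb.IsSymm)
    (De : Matrix (Fin p) (Fin s) ℝ) (ga : Fin s → ℝ)
    (hM : (Matrix.fromBlocks Ga Deᵀ De Omb).PosDef) :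
    ∀ y : Fin p → ℝ,
      (∫ t in {t : Fin s → ℝ | ∀ i, t i + ga i > 0},
          gaussPdf (Matrix.fromBlocks Ga Deᵀ De Omb) (Sum.elim t y)) =
        gaussPdf Omb y * gaussCdf (Ga - Deᵀ * Omb⁻¹ * De) (ga + (Deᵀ * Omb⁻¹) *ᵥ y) ∧
      (∫ t in {t : Fin s → ℝ | ∀ i, t i + ga i > 0},
          gaussPdf (Matrix.fromBlocks Ga Deᵀ De Omb) (Sum.elim t y)) / gaussCdf Ga ga =
        gaussPdf Omb y * gaussCdf (Ga - Deᵀ * Omb⁻¹ * De) (ga + (Deᵀ * Omb⁻¹) *ᵥ y) /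
          gaussCdf Ga ga :=
  sun_selection_representation_general Ga Omb De ga hM
end
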